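/- For every convex g ∈ 𝒞̆, one has ∫₀¹ Tg ≤ 1/3. -/

import Mathlib

open Set MeasureTheory Filter intervalIntegral

noncomputable section

/-- The class ℰ of decreasing functions `f : [0,1] → [0,1]` with `f 0 = 1` and positive area. -/
def MemE (f : ℝ → ℝ) : Prop :=
  (∀ x ∈ Icc (0:ℝ) 1, f x ∈ Icc (0:ℝ) 1) ∧
  AntitoneOn f (Icc 0 1) ∧ f 0 = 1 ∧ 0 < ∫ x in (0:ℝ)..1, f x

/-- Pseudo-inverse: `f* y = sup {x ∈ [0,1] | f x ≥ y}`. -/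
def pseudoInv (f : ℝ → ℝ) (y : ℝ) : ℝ :=
  sSup {x | x ∈ Icc (0:ℝ) 1 ∧ y ≤ f x}

/-- The operator `T`: `(Tf)(x) = (∫ₓ¹ f*) / (∫₀¹ f)`. -/
def Tmap (f : ℝ → ℝ) : ℝ → ℝ :=
  fun x => (∫ y in x..1, pseudoInv f y) / ∫ t in (0:ℝ)..1, f t

/-- The operator `I`: `(Ig)(x) = (∫ₓ¹ g) / (∫₀¹ g)`. -/
def Imap (g : ℝ → ℝ) : ℝ → ℝ :=
  fun x => (∫ t in x..1, g t) / ∫ t in (0:ℝ)..1, g t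

/-- The class 𝒞: continuous members of ℰ vanishing at 1. -/
def MemC (f : ℝ → ℝ) : Prop := MemE f ∧ ContinuousOn f (Icc 0 1) ∧ f 1 = 0

/-- The class 𝒞̆: convex members of 𝒞. -/
def MemCconv (f : ℝ → ℝ) : Prop := MemC f ∧ ConvexOn ℝ (Icc 0 1) f

/-- The class 𝒟: strictly decreasing members of 𝒞. -/
def MemD (f : ℝ → ℝ) : Prop := MemC f ∧ StrictAntiOn f (Icc 0 1)

/-- The class 𝒟̆ = 𝒟 ∩ 𝒞̆. -/
def MemDconv (f : ℝ → ℝ) : Prop := MemD f ∧ ConvexOn ℝ (Icc 0 1) f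

/-- The stride `σ g = sup {α ≥ 0 | α - x ≤ α * g x for all x ∈ [0,1]}`. -/
def stride (g : ℝ → ℝ) : ℝ :=
  sSup {α : ℝ | 0 ≤ α ∧ ∀ x ∈ Icc (0:ℝ) 1, α - x ≤ α * g x}

/-- The class 𝒦. -/
def MemK (g : ℝ → ℝ) : Prop :=
  MemCconv g ∧ 1/5 ≤ stride g ∧ 1/5 ≤ ∫ x in (0:ℝ)..1, g x

/-- `[c,d] ⊆ [0,ℓ]` is a sign switch of `Δ`. -/
def SignSwitch (Δ : ℝ → ℝ) (ℓ c d : ℝ) : Prop :=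
  0 < c ∧ c ≤ d ∧ d < ℓ ∧ (∀ x ∈ Icc c d, Δ x = 0) ∧
  ∃ δ : ℝ, 0 < δ ∧ δ ≤ min c (ℓ - d) ∧
    ∀ x : ℝ, 0 < x → x ≤ δ → Δ (c - x) * Δ (d + x) < 0

/-- `χΔ`: the number of sign switches of `Δ` on `[0,ℓ]`, in `ℕ∞`. -/
def nSwitch (Δ : ℝ → ℝ) (ℓ : ℝ) : ℕ∞ :=
  {p : ℝ × ℝ | SignSwitch Δ ℓ p.1 p.2}.encard

/-- The crossing number `χ(f,g) = sup {χ(f(a·) - b g) : a, b > 0}`. -/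
def crossNum (f g : ℝ → ℝ) : ℕ∞ :=
  ⨆ a ∈ Set.Ioi (0:ℝ), ⨆ b ∈ Set.Ioi (0:ℝ),
    nSwitch (fun x => f (a * x) - b * g x) (min 1 (1/a))

/-- `Dominates f g` means `f` dominates `g`, written `g ◁ f`. -/
def Dominates (f g : ℝ → ℝ) : Prop :=
  crossNum f g = 2 ∧ ∀ x ∈ Icc (0:ℝ) 1, g x ≤ f x

/-! For convex `g` with `g 0 = 1` and `g 1 = 0`, convexity along the chord from `(0, 1)` gives
`g* (1 - l + l y) ≤ l g* y`; rescaling `[x, 1]` to `[0, 1]` then yields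
`∫ₓ¹ g* ≤ (1 - x)² ∫₀¹ g*`, and integrating over `x` gives `∫₀¹ Tg ≤ (∫₀¹ g*) / (3 ∫₀¹ g)`.
Finally `∫₀¹ g* ≤ ∫₀¹ g` by the layer-cake formula, since `[0, g* t)` lies in the
superlevel set `{t ≤ g}`. -/

section PseudoInv

variable {g : ℝ → ℝ}

theorem pseudoInv_nonneg (y : ℝ) : 0 ≤ pseudoInv g y :=
  Real.sSup_nonneg fun _ hx => hx.1.1

theorem le_pseudoInv {x y : ℝ} (hx : x ∈ Icc (0:ℝ) 1) (hy : y ≤ g x) : x ≤ pseudoInv g y :=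
  le_csSup ⟨1, fun _ hx => hx.1.2⟩ ⟨hx, hy⟩

theorem antitone_pseudoInv : Antitone (pseudoInv g) := by
  intro y₁ y₂ hy
  by_cases hne : {x | x ∈ Icc (0:ℝ) 1 ∧ y₂ ≤ g x}.Nonempty
  · exact csSup_le hne fun x hx => le_pseudoInv hx.1 (hy.trans hx.2)
  · rw [pseudoInv, not_nonempty_iff_eq_empty.1 hne, Real.sSup_empty]
    exact pseudoInv_nonneg y₁

theorem mem_Icc_and_le_of_lt_pseudoInv (hanti : AntitoneOn g (Icc 0 1)) {x y : ℝ} (hx : 0 ≤ x)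
    (hxy : x < pseudoInv g y) : x ∈ Icc (0:ℝ) 1 ∧ y ≤ g x := by
  have hne : {x | x ∈ Icc (0:ℝ) 1 ∧ y ≤ g x}.Nonempty := by
    by_contra hne
    rw [pseudoInv, not_nonempty_iff_eq_empty.1 hne, Real.sSup_empty] at hxy
    linarith
  obtain ⟨a, ⟨ha, hya⟩, hxa⟩ := exists_lt_of_lt_csSup hne hxy
  have hx1 : x ∈ Icc (0:ℝ) 1 := ⟨hx, hxa.le.trans ha.2⟩
  exact ⟨hx1, hya.trans (hanti hx1 ha hxa.le)⟩

theorem ConvexOn.le_one_sub (hconv : ConvexOn ℝ (Icc 0 1) g) (hg0 : g 0 = 1) (hg1 : g 1 = 0)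
    {x : ℝ} (hx : x ∈ Icc (0:ℝ) 1) : g x ≤ 1 - x := by
  have h := hconv.2 (left_mem_Icc.2 zero_le_one) (right_mem_Icc.2 zero_le_one)
    (sub_nonneg.2 hx.2) hx.1 (sub_add_cancel 1 x)
  simp only [smul_eq_mul, mul_zero, mul_one, zero_add, hg0, hg1] at h
  linarith

theorem ConvexOn.le_one_sub_add_mul (hconv : ConvexOn ℝ (Icc 0 1) g) (hg0 : g 0 = 1)
    {l x : ℝ} (hl : 0 < l) (hl1 : l ≤ 1) (hx : x ∈ Icc (0:ℝ) 1) (hxl : x ≤ l) :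
    g x ≤ 1 - l + l * g (x / l) := by
  have hxl' : x / l ∈ Icc (0:ℝ) 1 := ⟨div_nonneg hx.1 hl.le, (div_le_one hl).2 hxl⟩
  have h := hconv.2 (left_mem_Icc.2 zero_le_one) hxl' (sub_nonneg.2 hl1) hl.le
    (sub_add_cancel 1 l)
  simpa only [smul_eq_mul, mul_zero, zero_add, hg0, mul_one,
    mul_div_cancel₀ x hl.ne'] using h

theorem pseudoInv_one_sub_add_mul_le (hconv : ConvexOn ℝ (Icc 0 1) g) (hg0 : g 0 = 1)
    (hg1 : g 1 = 0) {l y : ℝ} (hl : 0 < l) (hl1 : l ≤ 1) (hy : 0 ≤ y) :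
    pseudoInv g (1 - l + l * y) ≤ l * pseudoInv g y := by
  refine Real.sSup_le (fun x ⟨hx, hgx⟩ => ?_) (mul_nonneg hl.le (pseudoInv_nonneg y))
  have hxl : x ≤ l := by nlinarith [hconv.le_one_sub hg0 hg1 hx]
  have hy' : y ≤ g (x / l) := by nlinarith [hconv.le_one_sub_add_mul hg0 hl hl1 hx hxl]
  calc x = l * (x / l) := (mul_div_cancel₀ x hl.ne').symm
    _ ≤ l * pseudoInv g y := by
      gcongr
      exact le_pseudoInv ⟨div_nonneg hx.1 hl.le, (div_le_one hl).2 hxl⟩ hy'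

end PseudoInv

theorem integral_le_one_sub_sq_mul_integral {h : ℝ → ℝ} (hanti : Antitone h)
    (hscale : ∀ l y : ℝ, 0 < l → l ≤ 1 → 0 ≤ y → h (1 - l + l * y) ≤ l * h y)
    {x : ℝ} (hx : x ∈ Icc (0:ℝ) 1) :
    (∫ y in x..1, h y) ≤ (1 - x) ^ 2 * ∫ y in (0:ℝ)..1, h y := by
  rcases hx.2.eq_or_lt with rfl | hx1
  · simp
  set l := 1 - x with hl_def
  have hl : 0 < l := sub_pos.2 hx1
  have hl1 : l ≤ 1 := by linarith [hx.1]
  have hsubst : (∫ y in x..1, h y) = l * ∫ y in (0:ℝ)..1, h (l * y + x) := by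
    rw [← smul_eq_mul, intervalIntegral.smul_integral_comp_mul_add, mul_zero, zero_add,
      mul_one, hl_def, sub_add_cancel]
  have hcomp : Antitone fun y => h (l * y + x) :=
    hanti.comp_monotone fun _ _ hab => by gcongr
  calc (∫ y in x..1, h y) = l * ∫ y in (0:ℝ)..1, h (l * y + x) := hsubst
    _ ≤ l * ∫ y in (0:ℝ)..1, l * h y := by
      gcongr
      refine intervalIntegral.integral_mono_on zero_le_one hcomp.intervalIntegrable
        (hanti.intervalIntegrable.const_mul l) fun y hy => ?_
      simpa only [hl_def, sub_sub_cancel, add_comm] using hscale l y hl hl1 hy.1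
    _ = (1 - x) ^ 2 * ∫ y in (0:ℝ)..1, h y := by
      rw [intervalIntegral.integral_const_mul]; ring

theorem integral_pseudoInv_le_integral {g : ℝ → ℝ} (hnonneg : ∀ x ∈ Icc (0:ℝ) 1, 0 ≤ g x)
    (hanti : AntitoneOn g (Icc 0 1)) :
    (∫ y in (0:ℝ)..1, pseudoInv g y) ≤ ∫ x in (0:ℝ)..1, g x := by
  have hg_int : IntegrableOn g (Ioc 0 1) :=
    (AntitoneOn.intervalIntegrable (by rwa [uIcc_of_le zero_le_one])).1
  have hg_nonneg : ∀ x ∈ Ioc (0:ℝ) 1, 0 ≤ g x :=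
    fun x hx => hnonneg x (Ioc_subset_Icc_self hx)
  have hg_nonneg_ae : 0 ≤ᵐ[volume.restrict (Ioc 0 1)] g :=
    ae_restrict_of_forall_mem measurableSet_Ioc hg_nonneg
  have hslice : ∀ t,
      ENNReal.ofReal (pseudoInv g t) ≤ volume.restrict (Ioc 0 1) {x | t ≤ g x} := by
    intro t
    rw [Measure.restrict_apply' measurableSet_Ioc, ← sub_zero (pseudoInv g t),
      ← Real.volume_Ioo]
    refine measure_mono fun x hx => ?_
    obtain ⟨hx01, htx⟩ := mem_Icc_and_le_of_lt_pseudoInv hanti hx.1.le hx.2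
    exact ⟨htx, hx.1, hx01.2⟩
  rw [integral_of_le zero_le_one, integral_of_le zero_le_one,
    ← ENNReal.ofReal_le_ofReal_iff (setIntegral_nonneg measurableSet_Ioc hg_nonneg),
    ofReal_integral_eq_lintegral_ofReal
      (antitone_pseudoInv.intervalIntegrable (a := 0) (b := 1)).1 (ae_of_all _ pseudoInv_nonneg),
    ofReal_integral_eq_lintegral_ofReal hg_int hg_nonneg_ae,
    lintegral_eq_lintegral_meas_le _ hg_nonneg_ae hg_int.aemeasurable]
  calc ∫⁻ t in Ioc 0 1, ENNReal.ofReal (pseudoInv g t)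
      ≤ ∫⁻ t in Ioc 0 1, volume.restrict (Ioc 0 1) {x | t ≤ g x} :=
        setLIntegral_mono' measurableSet_Ioc fun t _ => hslice t
    _ ≤ ∫⁻ t in Ioi 0, volume.restrict (Ioc 0 1) {x | t ≤ g x} :=
        lintegral_mono_set Ioc_subset_Ioi_self

theorem integral_integral_le_div_three {h : ℝ → ℝ} (hanti : Antitone h)
    (hscale : ∀ l y : ℝ, 0 < l → l ≤ 1 → 0 ≤ y → h (1 - l + l * y) ≤ l * h y) :
    (∫ x in (0:ℝ)..1, ∫ y in x..1, h y) ≤ (∫ y in (0:ℝ)..1, h y) / 3 := by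
  have hprim : IntervalIntegrable (fun x => ∫ y in x..1, h y) volume 0 1 :=
    (continuousOn_primitive_interval_left
      (hanti.locallyIntegrable.integrableOn_isCompact isCompact_uIcc)).intervalIntegrable
  calc (∫ x in (0:ℝ)..1, ∫ y in x..1, h y)
      ≤ ∫ x in (0:ℝ)..1, (1 - x) ^ 2 * ∫ y in (0:ℝ)..1, h y :=
        intervalIntegral.integral_mono_on zero_le_one hprim
          (Continuous.intervalIntegrable (by fun_prop) 0 1)
          fun x hx => integral_le_one_sub_sq_mul_integral hanti hscale hx
    _ = (∫ y in (0:ℝ)..1, h y) / 3 := by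
      rw [intervalIntegral.integral_mul_const,
        intervalIntegral.integral_comp_sub_left (fun u : ℝ => u ^ 2)]
      norm_num
      ring

/-- for every convex `g ∈ 𝒞̆`, `∫₀¹ Tg ≤ 1/3`. -/
theorem stmt7 (g : ℝ → ℝ) (hg : MemCconv g) :
    (∫ x in (0:ℝ)..1, Tmap g x) ≤ 1/3 := by
  obtain ⟨⟨⟨hmap, hanti, hg0, hpos⟩, -, hg1⟩, hconv⟩ := hg
  have hT : (∫ x in (0:ℝ)..1, Tmap g x)
      = (∫ x in (0:ℝ)..1, ∫ y in x..1, pseudoInv g y) / ∫ t in (0:ℝ)..1, g t :=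
    intervalIntegral.integral_div _ _
  rw [hT, div_le_iff₀ hpos]
  calc (∫ x in (0:ℝ)..1, ∫ y in x..1, pseudoInv g y)
      ≤ (∫ y in (0:ℝ)..1, pseudoInv g y) / 3 :=
        integral_integral_le_div_three antitone_pseudoInv
          fun _ _ hl hl1 hy => pseudoInv_one_sub_add_mul_le hconv hg0 hg1 hl hl1 hy
    _ ≤ 1 / 3 * ∫ t in (0:ℝ)..1, g t := by
      have := integral_pseudoInv_le_integral (fun x hx => (hmap x hx).1) hanti
      linarith
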